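/- For the learning rates α_n = (C+1)/(C+n) and products α_n^i := α_i·∏_{j=i+1}^n (1−α_j): for every fixed i ≥ 1, Σ_{n=i}^∞ α_n^i ≤ 1 + 1/C. -/

import Mathlib

open scoped BigOperators

/-- The learning rate `α_n = (C+1)/(C+n)`. -/
noncomputable def lr (C n : ℕ) : ℝ := ((C : ℝ) + 1) / ((C : ℝ) + n)

/-- The weight `α_n^i = α_i · ∏_{j=i+1}^n (1 − α_j)`. -/
noncomputable def lrw (C n i : ℕ) : ℝ := lr C i * ∏ j ∈ Finset.Icc (i + 1) n, (1 - lr C j)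

noncomputable def Faux (C i n : ℕ) : ℝ :=
  if i ≤ n then lrw C n i * ((C : ℝ) + n) / C else 1 + 1 / (C : ℝ)

lemma lr_nonneg (C n : ℕ) : 0 ≤ lr C n := by
  unfold lr; positivity

lemma one_sub_lr_nonneg (C j : ℕ) (hj : 1 ≤ j) : 0 ≤ 1 - lr C j := by
  unfold lr
  rw [sub_nonneg]
  apply div_le_one_of_le₀
  · have : (1:ℝ) ≤ (j:ℝ) := by exact_mod_cast hj
    linarith
  · positivity

lemma lrw_nonneg (C n i : ℕ) : 0 ≤ lrw C n i := by
  unfold lrw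
  apply mul_nonneg (lr_nonneg C i)
  apply Finset.prod_nonneg
  intro j hj
  have := (Finset.mem_Icc.mp hj).1
  exact one_sub_lr_nonneg C j (by omega)

lemma lrw_succ (C n i : ℕ) (h : i ≤ n) :
    lrw C (n+1) i = lrw C n i * (1 - lr C (n+1)) := by
  unfold lrw
  rw [Finset.prod_Icc_succ_top (by omega : i + 1 ≤ n + 1), mul_assoc]

lemma lrw_self (C i : ℕ) : lrw C i i = lr C i := by
  unfold lrw
  rw [Finset.Icc_eq_empty (by omega), Finset.prod_empty, mul_one]

lemma Faux_nonneg (C i n : ℕ) (hC : 1 ≤ C) : 0 ≤ Faux C i n := by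
  have hC0 : (0:ℝ) < C := by exact_mod_cast hC
  unfold Faux
  split_ifs with h
  · have := lrw_nonneg C n i
    positivity
  · positivity

lemma Faux_step (C i : ℕ) (hC : 1 ≤ C) (hi : 1 ≤ i) (n : ℕ) :
    (if i ≤ n then lrw C n i else 0) = Faux C i n - Faux C i (n+1) := by
  have hC0 : (0:ℝ) < C := by exact_mod_cast hC
  have hCn : (0:ℝ) < (C:ℝ) + ((n:ℝ)+1) := by positivity
  unfold Faux
  by_cases h : i ≤ n
  · rw [if_pos h, if_pos h, if_pos (by omega : i ≤ n+1)]
    rw [lrw_succ C n i h]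
    have hlr : 1 - lr C (n+1) = (n:ℝ) / ((C:ℝ) + ((n:ℝ)+1)) := by
      unfold lr
      push_cast
      field_simp
      ring
    rw [hlr]
    push_cast
    field_simp
    ring
  · rw [if_neg h, if_neg h]
    by_cases h1 : i ≤ n + 1
    · have hin : i = n + 1 := by omega
      rw [if_pos h1, ← hin, lrw_self]
      unfold lr
      have hCi : ((C:ℝ) + (i:ℝ)) ≠ 0 := by positivity
      rw [div_mul_eq_mul_div, mul_div_assoc, div_self hCi, mul_one]
      field_simp
      ring
    · rw [if_neg h1]; ring

/-- For every fixed `i ≥ 1`, `∑_{n=i}^∞ α_n^i ≤ 1 + 1/C`. -/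
theorem lrw_tsum_bound (C : ℕ) (hC : 1 ≤ C) (i : ℕ) (hi : 1 ≤ i) :
    ∑' n : ℕ, (if i ≤ n then lrw C n i else 0) ≤ 1 + 1 / (C : ℝ) := by
  apply Real.tsum_le_of_sum_range_le
  · intro n
    split_ifs with h
    · exact lrw_nonneg C n i
    · exact le_refl 0
  · intro N
    have hF0 : Faux C i 0 = 1 + 1 / (C : ℝ) := by
      unfold Faux
      rw [if_neg (by omega)]
    calc ∑ n ∈ Finset.range N, (if i ≤ n then lrw C n i else 0)
        = ∑ n ∈ Finset.range N, (Faux C i n - Faux C i (n+1)) := by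
          exact Finset.sum_congr rfl fun n _ => Faux_step C i hC hi n
      _ = Faux C i 0 - Faux C i N := Finset.sum_range_sub' (Faux C i) N
      _ ≤ Faux C i 0 := by linarith [Faux_nonneg C i N hC]
      _ = 1 + 1 / (C : ℝ) := hF0
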